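/- Every unary function t in the clone C other than the identity and the functions φ_p (p ∈ P) is distracted; that is, every t ∈ C^(1)∖(Φ ∪ {id}) is distracted. -/

import Mathlib

universe u v

/-- A clone on `X`: a set of finitary operations (of each arity `n + 1 ≥ 1`)
containing all projections and closed under composition. -/
structure Clone (X : Type u) where
  carrier : ∀ n : ℕ, Set ((Fin (n + 1) → X) → X)
  proj_mem : ∀ (n : ℕ) (i : Fin (n + 1)), (fun x => x i) ∈ carrier n
  comp_mem : ∀ {m n : ℕ} (f : (Fin (m + 1) → X) → X)
      (g : Fin (m + 1) → (Fin (n + 1) → X) → X),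
      f ∈ carrier m → (∀ i, g i ∈ carrier n) →
      (fun x => f fun i => g i x) ∈ carrier n

namespace Clone

variable {X : Type u}

theorem carrier_injective : Function.Injective (Clone.carrier (X := X)) := by
  rintro ⟨c, _, _⟩ ⟨d, _, _⟩ h
  simpa using h

instance : PartialOrder (Clone X) where
  le C D := ∀ n, C.carrier n ⊆ D.carrier n
  le_refl _ _ := subset_rfl
  le_trans _ _ _ h₁ h₂ n := (h₁ n).trans (h₂ n)
  le_antisymm _ _ h₁ h₂ :=
    carrier_injective (funext fun n => subset_antisymm (h₁ n) (h₂ n))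

instance : InfSet (Clone X) where
  sInf S :=
    { carrier := fun n => ⋂ C ∈ S, C.carrier n
      proj_mem := fun n i => Set.mem_iInter₂.2 fun C _ => C.proj_mem n i
      comp_mem := fun f g hf hg => Set.mem_iInter₂.2 fun C hC =>
        C.comp_mem f g (Set.mem_iInter₂.1 hf C hC)
          fun i => Set.mem_iInter₂.1 (hg i) C hC }

/-- The lattice `Cl(X)` of all clones on `X` is a complete lattice
(with infima given by intersection). -/
instance : CompleteLattice (Clone X) :=
  completeLatticeOfInf (Clone X) (fun S =>
    ⟨fun C hC n _ hx => Set.mem_iInter₂.1 hx C hC,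
     fun _ hD n _ hx => Set.mem_iInter₂.2 fun C hC => hD hC n hx⟩)

/-- The clone generated by a family `F` of operations:
the smallest clone whose carrier contains `F`. -/
def cloneGen (F : ∀ n : ℕ, Set ((Fin (n + 1) → X) → X)) : Clone X :=
  sInf {C : Clone X | ∀ n, F n ⊆ C.carrier n}

end Clone

attribute [local instance] Classical.propDecidable

noncomputable section Construction

variable {X : Type u} {P : Type v} [SemilatticeSup P]
variable (e0 e1 e2 e4 : X) (Af : P → Set X)

/-- `A = X ∖ {0, 1, 2, 4}`. -/
def Aset : Set X := ({e0, e1, e2, e4} : Set X)ᶜ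

/-- The unary function `φ_p`: the characteristic function of `A_p` on `A`,
fixing `2` and sending `{0, 1, 4}` to `4`. -/
def phi (p : P) (x : X) : X :=
  if x ∈ Af p then e1
  else if x ∈ Aset e0 e1 e2 e4 then e0
  else if x = e2 then e2
  else e4

/-- The ternary function `m_p^{q₁,q₂}`. -/
def mOp (p q1 q2 : P) (x y z : X) : X :=
  if y = phi e0 e1 e2 e4 Af q1 x ∧ z = phi e0 e1 e2 e4 Af q2 x then
    phi e0 e1 e2 e4 Af p x
  else if (x = e2 ∨ y = e2 ∨ z = e2) ∧ y ≠ e1 ∧ y ≠ e4 ∧ z ≠ e1 ∧ z ≠ e4 then e2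
  else e4

/-- `φ_p` as a unary operation (member of arity-1 part of a clone). -/
def phi1 (p : P) : (Fin 1 → X) → X := fun x => phi e0 e1 e2 e4 Af p (x 0)

/-- `m_p^{q₁,q₂}` as a ternary operation. -/
def m3 (p q1 q2 : P) : (Fin 3 → X) → X :=
  fun x => mOp e0 e1 e2 e4 Af p q1 q2 (x 0) (x 1) (x 2)

/-- The family `Φ_Q = {φ_p : p ∈ Q}`, as a family of operations indexed by arity. -/
def PhiFam (Q : Set P) : ∀ n : ℕ, Set ((Fin (n + 1) → X) → X)
  | 0 => {f | ∃ p ∈ Q, f = phi1 e0 e1 e2 e4 Af p}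
  | _ + 1 => ∅

/-- The family `M = {m_p^{q₁,q₂} : p ≤ q₁ ∨ q₂}`, as a family of operations indexed by arity. -/
def MFam : ∀ n : ℕ, Set ((Fin (n + 1) → X) → X)
  | 2 => {f | ∃ p q1 q2 : P, p ≤ q1 ⊔ q2 ∧ f = m3 e0 e1 e2 e4 Af p q1 q2}
  | _ => ∅

/-- The clone `C = ⟨Φ ∪ M⟩`. -/
def CClone : Clone X :=
  Clone.cloneGen fun n => PhiFam e0 e1 e2 e4 Af Set.univ n ∪ MFam e0 e1 e2 e4 Af n

/-- A function depends on its `i`-th variable iff it takes different values on two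
tuples differing only in the `i`-th coordinate. -/
def DependsOn' {n : ℕ} (t : (Fin n → X) → X) (i : Fin n) : Prop :=
  ∃ a b : Fin n → X, (∀ j, j ≠ i → a j = b j) ∧ t a ≠ t b

/-- A unary function is distracted iff it takes a value in `{2, 4}` somewhere on `A`. -/
def Distracted (f : X → X) : Prop :=
  ∃ a ∈ Aset e0 e1 e2 e4, f a = e2 ∨ f a = e4

/-- The unary function `X → X` corresponding to a unary operation. -/
def toFun1 (u : (Fin 1 → X) → X) : X → X := fun a => u fun _ => a

/-- An `n`-ary member of `C` is unspoilt iff some substitution of unary members of `C`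
into it yields an element of `Φ`. -/
def Unspoilt {n : ℕ} (t : (Fin (n + 1) → X) → X) : Prop :=
  ∃ ts : Fin (n + 1) → (Fin 1 → X) → X,
    (∀ i, ts i ∈ (CClone e0 e1 e2 e4 Af).carrier 0) ∧
    (fun x : Fin 1 → X => t fun i => ts i x) ∈ PhiFam e0 e1 e2 e4 Af Set.univ 0

/-- The family `S` of all spoilt members of `C`. -/
def SpoiltFam (n : ℕ) : Set ((Fin (n + 1) → X) → X) :=
  {t | t ∈ (CClone e0 e1 e2 e4 Af).carrier n ∧ ¬ Unspoilt e0 e1 e2 e4 Af t}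

/-- The clone `C_I = ⟨Φ_I ∪ M ∪ S⟩`. -/
def CI (I : Set P) : Clone X :=
  Clone.cloneGen fun n =>
    PhiFam e0 e1 e2 e4 Af I n ∪ MFam e0 e1 e2 e4 Af n ∪ SpoiltFam e0 e1 e2 e4 Af n

end Construction

/-- An ideal of a join-semilattice: a downward closed subset closed under finite joins. -/
def IsIdealP {P : Type v} [SemilatticeSup P] (I : Set P) : Prop :=
  (∀ p q : P, p ≤ q → q ∈ I → p ∈ I) ∧ ∀ p q : P, p ∈ I → q ∈ I → p ⊔ q ∈ I

/-- The ideal of `P` generated by a subset `I`. -/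
def idealGen {P : Type v} [SemilatticeSup P] (I : Set P) : Set P :=
  ⋂₀ {J : Set P | IsIdealP J ∧ I ⊆ J}

/-! Call a unary function admissible if it is the identity, some `φ_p`, or distracted. The
operations that send admissible arguments to admissible functions form a clone, and every
generator of `C` lies in it: `φ_p ∘ φ_q` maps `A` into `{0, 1}` and then to `4`, and `φ_p`
fixes `2` and `4`. For `m_p^{q₁,q₂}(g₀, g₁, g₂)` to avoid `{2, 4}` on `A`, its first case must
apply at every `a ∈ A` with `g₀ a ∈ A`; this forces `g₀ = id` and `gᵢ = φ_{qᵢ}` on `A`, hence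
everywhere since all `φ`s agree off `A`; the composite is then `φ_p`. So `t = t ∘ id` is
admissible. -/

namespace Clone

variable {X : Type u}

theorem cloneGen_le {F : ∀ n : ℕ, Set ((Fin (n + 1) → X) → X)} {C : Clone X}
    (h : ∀ n, F n ⊆ C.carrier n) : cloneGen F ≤ C :=
  sInf_le h

def preserving (G : Set (X → X)) : Clone X where
  carrier n := {t | ∀ g : Fin (n + 1) → X → X, (∀ i, g i ∈ G) → (fun a => t fun i => g i a) ∈ G}
  proj_mem _ i _ hg := hg i
  comp_mem f gs hf hgs g hg := hf (fun i a => gs i fun j => g j a) fun i => hgs i g hg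

theorem toFun1_mem_of_mem_preserving {G : Set (X → X)} (hid : id ∈ G)
    {t : (Fin 1 → X) → X} (ht : t ∈ (preserving G).carrier 0) : toFun1 t ∈ G :=
  ht (fun _ => id) fun _ => hid

end Clone

theorem toFun1_injective {X : Type u} : Function.Injective (toFun1 (X := X)) := by
  intro s t h
  funext x
  have hx : (fun _ => x 0) = x := funext fun i => by rw [Fin.fin_one_eq_zero i]
  simpa only [toFun1, hx] using congrFun h (x 0)

section Admissible

variable {X : Type u} {P : Type v}

def admissibleUnary (e0 e1 e2 e4 : X) (Af : P → Set X) : Set (X → X) :=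
  {g | g = id ∨ (∃ p, g = phi e0 e1 e2 e4 Af p) ∨ Distracted e0 e1 e2 e4 g}

variable {e0 e1 e2 e4 : X} {Af : P → Set X}

theorem Aset_nonempty [Infinite X] : (Aset e0 e1 e2 e4).Nonempty :=
  (Set.toFinite {e0, e1, e2, e4}).infinite_compl.nonempty

theorem phi_eq_e0_or_e1_of_mem_Aset {p : P} {x : X} (hx : x ∈ Aset e0 e1 e2 e4) :
    phi e0 e1 e2 e4 Af p x = e0 ∨ phi e0 e1 e2 e4 Af p x = e1 := by
  unfold phi
  split_ifs <;> simp_all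

theorem phi_of_notMem_Aset (hAf : ∀ p, Af p ⊆ Aset e0 e1 e2 e4) {p : P} {x : X}
    (hx : x ∉ Aset e0 e1 e2 e4) :
    phi e0 e1 e2 e4 Af p x = if x = e2 then e2 else e4 := by
  have hxp : x ∉ Af p := fun h => hx (hAf p h)
  simp [phi, hx, hxp]

theorem notMem_Aset_of_eq_e2_or_eq_e4 {x : X} (hx : x = e2 ∨ x = e4) :
    x ∉ Aset e0 e1 e2 e4 := by
  rcases hx with rfl | rfl <;> simp [Aset]

theorem phi_notMem_Aset (hAf : ∀ p, Af p ⊆ Aset e0 e1 e2 e4) (p : P) (x : X) :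
    phi e0 e1 e2 e4 Af p x ∉ Aset e0 e1 e2 e4 := by
  by_cases hx : x ∈ Aset e0 e1 e2 e4
  · rcases phi_eq_e0_or_e1_of_mem_Aset (Af := Af) (p := p) hx with h | h <;> simp [h, Aset]
  · rw [phi_of_notMem_Aset hAf hx]
    exact notMem_Aset_of_eq_e2_or_eq_e4 (by split_ifs <;> simp)

theorem phi_eq_of_eqOn_Aset (hAf : ∀ p, Af p ⊆ Aset e0 e1 e2 e4) {q r : P}
    (h : Set.EqOn (phi e0 e1 e2 e4 Af q) (phi e0 e1 e2 e4 Af r) (Aset e0 e1 e2 e4)) :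
    phi e0 e1 e2 e4 Af q = phi e0 e1 e2 e4 Af r := by
  funext x
  by_cases hx : x ∈ Aset e0 e1 e2 e4
  · exact h hx
  · rw [phi_of_notMem_Aset hAf hx, phi_of_notMem_Aset hAf hx]

theorem distracted_phi_comp (hAf : ∀ p, Af p ⊆ Aset e0 e1 e2 e4) (p : P) {g : X → X}
    (hg : Distracted e0 e1 e2 e4 g) : Distracted e0 e1 e2 e4 (phi e0 e1 e2 e4 Af p ∘ g) := by
  obtain ⟨a, ha, hga⟩ := hg
  refine ⟨a, ha, ?_⟩
  rw [Function.comp_apply, phi_of_notMem_Aset hAf (notMem_Aset_of_eq_e2_or_eq_e4 hga)]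
  split_ifs <;> simp

theorem distracted_phi_comp_phi [Infinite X] (h02 : e0 ≠ e2) (h12 : e1 ≠ e2)
    (hAf : ∀ p, Af p ⊆ Aset e0 e1 e2 e4) (p q : P) :
    Distracted e0 e1 e2 e4 (phi e0 e1 e2 e4 Af p ∘ phi e0 e1 e2 e4 Af q) := by
  obtain ⟨a, ha⟩ := Aset_nonempty (e0 := e0) (e1 := e1) (e2 := e2) (e4 := e4)
  refine ⟨a, ha, Or.inr ?_⟩
  rw [Function.comp_apply, phi_of_notMem_Aset hAf (phi_notMem_Aset hAf q a), if_neg]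
  rcases phi_eq_e0_or_e1_of_mem_Aset (Af := Af) (p := q) ha with h | h <;> rw [h] <;> assumption

theorem eq_id_of_mapsTo_Aset [Infinite X] (hAf : ∀ p, Af p ⊆ Aset e0 e1 e2 e4) {g : X → X}
    (hg : g ∈ admissibleUnary e0 e1 e2 e4 Af)
    (hA : Set.MapsTo g (Aset e0 e1 e2 e4) (Aset e0 e1 e2 e4)) : g = id := by
  rcases hg with hg | ⟨q, rfl⟩ | ⟨a, ha, hga⟩
  · exact hg
  · obtain ⟨a, ha⟩ := Aset_nonempty (e0 := e0) (e1 := e1) (e2 := e2) (e4 := e4)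
    exact absurd (hA ha) (phi_notMem_Aset hAf q a)
  · exact absurd (hA ha) (notMem_Aset_of_eq_e2_or_eq_e4 hga)

theorem eq_phi_of_eqOn_Aset [Infinite X] (h02 : e0 ≠ e2) (h04 : e0 ≠ e4) (h12 : e1 ≠ e2)
    (h14 : e1 ≠ e4) (hAf : ∀ p, Af p ⊆ Aset e0 e1 e2 e4) {g : X → X} {q : P}
    (hg : g ∈ admissibleUnary e0 e1 e2 e4 Af)
    (h : Set.EqOn g (phi e0 e1 e2 e4 Af q) (Aset e0 e1 e2 e4)) : g = phi e0 e1 e2 e4 Af q := by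
  rcases hg with rfl | ⟨r, rfl⟩ | ⟨a, ha, hga⟩
  · obtain ⟨a, ha⟩ := Aset_nonempty (e0 := e0) (e1 := e1) (e2 := e2) (e4 := e4)
    have hqa : a = phi e0 e1 e2 e4 Af q a := h ha
    exact absurd (hqa ▸ ha) (phi_notMem_Aset hAf q a)
  · exact phi_eq_of_eqOn_Aset hAf h
  · rw [h ha] at hga
    rcases phi_eq_e0_or_e1_of_mem_Aset (Af := Af) (p := q) ha with h' | h' <;> rw [h'] at hga <;> tauto

theorem mOp_fires (hAf : ∀ p, Af p ⊆ Aset e0 e1 e2 e4) {p q1 q2 : P} {x y z : X}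
    (h2 : mOp e0 e1 e2 e4 Af p q1 q2 x y z ≠ e2) (h4 : mOp e0 e1 e2 e4 Af p q1 q2 x y z ≠ e4) :
    y = phi e0 e1 e2 e4 Af q1 x ∧ z = phi e0 e1 e2 e4 Af q2 x ∧ x ∈ Aset e0 e1 e2 e4 := by
  unfold mOp at h2 h4
  split_ifs at h2 h4 with hfire
  · refine ⟨hfire.1, hfire.2, ?_⟩
    by_contra hx
    rw [phi_of_notMem_Aset hAf hx] at h2 h4
    split_ifs at h2 h4 <;> contradiction
  all_goals contradiction

theorem phi1_mem_preserving [Infinite X] (h02 : e0 ≠ e2) (h12 : e1 ≠ e2)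
    (hAf : ∀ p, Af p ⊆ Aset e0 e1 e2 e4) (p : P) :
    phi1 e0 e1 e2 e4 Af p ∈ (Clone.preserving (admissibleUnary e0 e1 e2 e4 Af)).carrier 0 := by
  intro g hg
  show phi e0 e1 e2 e4 Af p ∘ g 0 ∈ admissibleUnary e0 e1 e2 e4 Af
  rcases hg 0 with hg0 | ⟨q, hg0⟩ | hg0
  · exact Or.inr (Or.inl ⟨p, by rw [hg0]; rfl⟩)
  · exact Or.inr (Or.inr (hg0 ▸ distracted_phi_comp_phi h02 h12 hAf p q))
  · exact Or.inr (Or.inr (distracted_phi_comp hAf p hg0))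

theorem m3_mem_preserving [Infinite X] (h02 : e0 ≠ e2) (h04 : e0 ≠ e4) (h12 : e1 ≠ e2)
    (h14 : e1 ≠ e4) (hAf : ∀ p, Af p ⊆ Aset e0 e1 e2 e4) (p q1 q2 : P) :
    m3 e0 e1 e2 e4 Af p q1 q2 ∈ (Clone.preserving (admissibleUnary e0 e1 e2 e4 Af)).carrier 2 := by
  intro g hg
  by_cases hd : Distracted e0 e1 e2 e4 fun a => m3 e0 e1 e2 e4 Af p q1 q2 fun i => g i a
  · exact Or.inr (Or.inr hd)
  have hfire (a : X) (ha : a ∈ Aset e0 e1 e2 e4) :=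
    mOp_fires hAf (fun h => hd ⟨a, ha, Or.inl h⟩) (fun h => hd ⟨a, ha, Or.inr h⟩)
  have hg0 : g 0 = id := eq_id_of_mapsTo_Aset hAf (hg 0) fun a ha => (hfire a ha).2.2
  have hg1 : g 1 = phi e0 e1 e2 e4 Af q1 :=
    eq_phi_of_eqOn_Aset h02 h04 h12 h14 hAf (hg 1) fun a ha => by simpa [hg0] using (hfire a ha).1
  have hg2 : g 2 = phi e0 e1 e2 e4 Af q2 :=
    eq_phi_of_eqOn_Aset h02 h04 h12 h14 hAf (hg 2) fun a ha =>
      by simpa [hg0] using (hfire a ha).2.1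
  refine Or.inr (Or.inl ⟨p, funext fun a => ?_⟩)
  simp [m3, mOp, hg0, hg1, hg2]

end Admissible

theorem CClone_le_preserving {X : Type u} {P : Type v} [Infinite X] [SemilatticeSup P]
    {e0 e1 e2 e4 : X} {Af : P → Set X} (h02 : e0 ≠ e2) (h04 : e0 ≠ e4) (h12 : e1 ≠ e2)
    (h14 : e1 ≠ e4) (hAf : ∀ p, Af p ⊆ Aset e0 e1 e2 e4) :
    CClone e0 e1 e2 e4 Af ≤ Clone.preserving (admissibleUnary e0 e1 e2 e4 Af) := by
  refine Clone.cloneGen_le fun n f hf => ?_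
  rcases hf with hf | hf
  · cases n with
    | zero =>
      obtain ⟨p, -, rfl⟩ := hf
      exact phi1_mem_preserving h02 h12 hAf p
    | succ n => exact hf.elim
  · rcases n with _ | _ | _ | n
    · exact hf.elim
    · exact hf.elim
    · obtain ⟨p, q1, q2, -, rfl⟩ := hf
      exact m3_mem_preserving h02 h04 h12 h14 hAf p q1 q2
    · exact hf.elim

theorem all_unary_distracted_general
    {X : Type u} {P : Type v} [Infinite X] [SemilatticeSup P]
    (e0 e1 e2 e4 : X)
    (hdist : e0 ≠ e1 ∧ e0 ≠ e2 ∧ e0 ≠ e4 ∧ e1 ≠ e2 ∧ e1 ≠ e4 ∧ e2 ≠ e4)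
    (Af : P → Set X) (hAf : ∀ p : P, Af p ⊆ Aset e0 e1 e2 e4)
    (t : (Fin 1 → X) → X) (ht : t ∈ (CClone e0 e1 e2 e4 Af).carrier 0)
    (hphi : ¬ ∃ p : P, t = phi1 e0 e1 e2 e4 Af p)
    (hid : t ≠ fun x => x 0) :
    Distracted e0 e1 e2 e4 (toFun1 t) := by
  obtain ⟨-, h02, h04, h12, h14, -⟩ := hdist
  have hC := CClone_le_preserving h02 h04 h12 h14 hAf 0 ht
  rcases Clone.toFun1_mem_of_mem_preserving (Or.inl rfl) hC with ht1 | ⟨p, ht1⟩ | ht1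
  · exact absurd (toFun1_injective ht1) hid
  · exact absurd ⟨p, toFun1_injective ht1⟩ hphi
  · exact ht1

/-- Lemma 4: every unary member of `C` other than the identity and the functions `φ_p`
is distracted. -/
theorem all_unary_distracted
    {X : Type u} {P : Type v} [Infinite X] [SemilatticeSup P]
    (e0 e1 e2 e4 : X)
    (hdist : e0 ≠ e1 ∧ e0 ≠ e2 ∧ e0 ≠ e4 ∧ e1 ≠ e2 ∧ e1 ≠ e4 ∧ e2 ≠ e4)
    (hcard : Cardinal.lift.{u} (Cardinal.mk P) ≤ Cardinal.lift.{v} (2 ^ Cardinal.mk X))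
    (Af : P → Set X) (hAf : ∀ p : P, Af p ⊆ Aset e0 e1 e2 e4)
    (hcover : ∀ (p : P) (k : ℕ) (q : Fin k → P),
      (∀ i, p ≠ q i) → ¬ Af p ⊆ ⋃ i, Af (q i))
    (t : (Fin 1 → X) → X) (ht : t ∈ (CClone e0 e1 e2 e4 Af).carrier 0)
    (hphi : ¬ ∃ p : P, t = phi1 e0 e1 e2 e4 Af p)
    (hid : t ≠ fun x => x 0) :
    Distracted e0 e1 e2 e4 (toFun1 t) :=
  all_unary_distracted_general e0 e1 e2 e4 hdist Af hAf t ht hphi hid
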